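/- Let G be a finite group. If the commutator subgroup of the enveloping group A(G) of the conjugacy quandle of G has cardinality strictly greater than the cardinality of the commutator subgroup of G (in particular if it is infinite while the commutator subgroup of G is finite), then there exists a symmetric 2-cocycle on G with values in ℂˣ that is not a coboundary. -/

import Mathlib

/-- A 2-cocycle on a group `G` with values in `ℂˣ` (trivial action). -/
def IsTwoCocycle {G : Type*} [Group G] (α : G → G → ℂˣ) : Prop :=
  ∀ g h k : G, α g h * α (g * h) k = α g (h * k) * α h k

/-- A 2-cocycle is symmetric if `α g h = α h g` for all `g h`. -/
def IsSymmCocycle {G : Type*} [Group G] (α : G → G → ℂˣ) : Prop :=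
  ∀ g h : G, α g h = α h g

/-- A 2-cocycle is a coboundary if `α g h = β g * β h * (β (g*h))⁻¹` for some `β`. -/
def IsCoboundary {G : Type*} [Group G] (α : G → G → ℂˣ) : Prop :=
  ∃ β : G → ℂˣ, ∀ g h : G, α g h = β g * β h * (β (g * h))⁻¹

/-- Relations `e_g e_h e_g⁻¹ = e_{g h g⁻¹}` defining the enveloping group of the
conjugacy quandle of `G`. -/
def conjQuandleRels (G : Type*) [Group G] : Set (FreeGroup G) :=
  { r | ∃ g h : G, r = FreeGroup.of g * FreeGroup.of h * (FreeGroup.of g)⁻¹ *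
      (FreeGroup.of (g * h * g⁻¹))⁻¹ }

/-- The enveloping group `A(G)` of the conjugacy quandle of `G`, as a presented group. -/
abbrev EnvelopingGroup (G : Type*) [Group G] : Type _ :=
  PresentedGroup (conjQuandleRels G)

/-!
The projection `p : A(G) → G`, `e_g ↦ g`, is a central extension: conjugation by `a` sends
`e_k` to `e_{p(a) k p(a)⁻¹}`, so `ker p` commutes with every generator. Its factor set
`c(g, h) = e_g e_h e_{gh}⁻¹` is symmetric because `e_g⁻¹ e_{gh} e_g = e_{hg}`. The
cardinality hypothesis yields `x ≠ 1` in `[A, A] ∩ ker p`, and since `ℚ/ℤ` embeds in `ℂˣ`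
there is a character `φ` of the centre of `A(G)` with `φ x ≠ 1`. Then `φ ∘ c` is not a
coboundary: if it were `δβ`, then `a ↦ φ(a e_{p a}⁻¹) β(p a)` would be a homomorphism
`A(G) → ℂˣ` agreeing with `φ` on `ker p`, and as `ℂˣ` is abelian it would kill `x`.
-/

noncomputable def ratAddCircleToReal : AddCircle (1 : ℚ) →+ AddCircle (1 : ℝ) :=
  QuotientAddGroup.map _ _ (Rat.castHom ℝ).toAddMonoidHom <| by
    rintro _ ⟨n, rfl⟩
    exact ⟨n, by simp⟩

theorem ratAddCircleToReal_injective : Function.Injective ratAddCircleToReal := by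
  rw [injective_iff_map_eq_zero]
  intro y hy
  induction y using QuotientAddGroup.induction_on with
  | H q =>
    obtain ⟨n, hn⟩ := (AddCircle.coe_eq_zero_iff (p := (1 : ℝ))).mp hy
    have hnq : (n : ℚ) = q := by exact_mod_cast (by simpa using hn : (n : ℝ) = q)
    exact (AddCircle.coe_eq_zero_iff (p := (1 : ℚ))).mpr ⟨n, by simpa using hnq⟩

open scoped IsMulCommutative in
theorem exists_monoidHom_units_complex_apply_ne_one {M : Type*} [Group M] [IsMulCommutative M]
    {x : M} (hx : x ≠ 1) : ∃ φ : M →* ℂˣ, φ x ≠ 1 := by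
  obtain ⟨χ, hχ⟩ := CharacterModule.exists_character_apply_ne_zero_of_ne_zero
    (a := Additive.ofMul x) hx
  let ψ : AddChar (Additive M) Circle :=
    AddCircle.toCircle_addChar.compAddMonoidHom (ratAddCircleToReal.comp χ)
  refine ⟨Circle.toUnits.comp ψ.toMonoidHom, fun h => hχ ?_⟩
  change Circle.toUnits (ψ (Additive.ofMul x)) = 1 at h
  apply ratAddCircleToReal_injective
  apply AddCircle.injective_toCircle one_ne_zero
  rw [map_zero, AddCircle.toCircle_zero]
  exact Circle.coe_injective (Units.ext_iff.mp h)

open Subgroup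

section CentralExtension

variable {E G : Type*} [Group E] [Group G] {p : E →* G} {s : G → E}

def factorSet (s : G → E) (g h : G) : E := s g * s h * (s (g * h))⁻¹

theorem factorSet_mul (s : G → E) (g h : G) : factorSet s g h * s (g * h) = s g * s h := by
  simp [factorSet]

theorem factorSet_mem_ker (hs : ∀ g, p (s g) = g) (g h : G) : factorSet s g h ∈ p.ker := by
  simp [factorSet, hs]

theorem factorSet_mem_center (hK : p.ker ≤ center E) (hs : ∀ g, p (s g) = g) (g h : G) :
    factorSet s g h ∈ center E :=
  hK (factorSet_mem_ker hs g h)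

theorem factorSet_mul_factorSet (hc : ∀ g h, factorSet s g h ∈ center E) (g h k : G) :
    factorSet s g h * factorSet s (g * h) k = factorSet s g (h * k) * factorSet s h k := by
  have hcomm := mem_center_iff.mp (hc h k)
  apply mul_left_injective (s (g * h * k))
  calc factorSet s g h * factorSet s (g * h) k * s (g * h * k)
      = s g * s h * s k := by rw [mul_assoc, factorSet_mul, ← mul_assoc, factorSet_mul]
    _ = s g * (factorSet s h k * s (h * k)) := by rw [factorSet_mul, mul_assoc]
    _ = factorSet s h k * (s g * s (h * k)) := by rw [← mul_assoc, hcomm, mul_assoc]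
    _ = factorSet s h k * (factorSet s g (h * k) * s (g * (h * k))) := by rw [factorSet_mul]
    _ = factorSet s g (h * k) * factorSet s h k * s (g * h * k) := by
        rw [← mul_assoc, ← hcomm, mul_assoc g]

def centralFactorSet (hc : ∀ g h, factorSet s g h ∈ center E) (g h : G) : center E :=
  ⟨factorSet s g h, hc g h⟩

theorem isTwoCocycle_comp_centralFactorSet (hc : ∀ g h, factorSet s g h ∈ center E)
    (φ : center E →* ℂˣ) : IsTwoCocycle fun g h => φ (centralFactorSet hc g h) := by
  intro g h k
  simp only [← map_mul]
  exact congrArg φ (Subtype.ext (factorSet_mul_factorSet hc g h k))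

theorem exists_monoidHom_extending_of_isCoboundary (hK : p.ker ≤ center E)
    (hs : ∀ g, p (s g) = g) {φ : center E →* ℂˣ}
    (hφ : IsCoboundary fun g h => φ (centralFactorSet (factorSet_mem_center hK hs) g h)) :
    ∃ L : E →* ℂˣ, ∀ x (hx : x ∈ p.ker), L x = φ ⟨x, hK hx⟩ := by
  obtain ⟨β, hβ⟩ := hφ
  set c := centralFactorSet (factorSet_mem_center hK hs)
  let r (e : E) : center E := ⟨e * (s (p e))⁻¹, hK (by simp [hs])⟩
  have r_mul (e e' : E) : r (e * e') = r e * r e' * c (p e) (p e') := by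
    have hcomm : (s (p e))⁻¹ * (e' * (s (p e'))⁻¹) = e' * (s (p e'))⁻¹ * (s (p e))⁻¹ :=
      mem_center_iff.mp (r e').2 _
    ext
    simp only [r, c, centralFactorSet, factorSet, coe_mul, map_mul]
    rw [mul_assoc e (s (p e))⁻¹, hcomm]
    group
  have r_of_mem_ker (x : E) (hx : x ∈ p.ker) : r x = ⟨x, hK hx⟩ * (c 1 1)⁻¹ := by
    ext
    simp [r, c, centralFactorSet, factorSet, p.mem_ker.mp hx]
  refine ⟨MonoidHom.mk' (fun e => φ (r e) * β (p e)) fun e e' => ?_, fun x hx => ?_⟩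
  · simp only [r_mul, map_mul, hβ]
    rw [← mul_assoc, inv_mul_cancel_right]
    exact mul_mul_mul_comm _ _ _ _
  · simp [r_of_mem_ker x hx, hβ, p.mem_ker.mp hx]

theorem apply_eq_one_of_isCoboundary (hK : p.ker ≤ center E)
    (hs : ∀ g, p (s g) = g) {φ : center E →* ℂˣ}
    (hφ : IsCoboundary fun g h => φ (centralFactorSet (factorSet_mem_center hK hs) g h))
    {x : E} (hx : x ∈ p.ker) (hxc : x ∈ commutator E) : φ ⟨x, hK hx⟩ = 1 := by
  obtain ⟨L, hL⟩ := exists_monoidHom_extending_of_isCoboundary hK hs hφ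
  rw [← hL x hx]
  exact Abelianization.commutator_subset_ker L hxc

end CentralExtension

universe u

theorem exists_mem_commutator_mem_ker_ne_one_of_card_lt {E G : Type u} [Group E] [Group G]
    (p : E →* G) (h : Cardinal.mk (commutator G) < Cardinal.mk (commutator E)) :
    ∃ x ∈ commutator E, x ∈ p.ker ∧ x ≠ 1 := by
  by_contra! hno
  have map_le : (commutator E).map p ≤ commutator G := by
    rw [map_commutator_eq, _root_.commutator_def]
    exact commutator_mono le_top le_top
  let q : commutator E →* commutator G :=
    (p.comp (commutator E).subtype).codRestrict _ fun y => map_le (mem_map_of_mem p y.2)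
  have hq : Function.Injective q := (injective_iff_map_eq_one q).mpr fun y hy =>
    Subtype.ext (hno y y.2 (Subtype.ext_iff.mp hy))
  exact h.not_ge (Cardinal.mk_le_of_injective hq)

namespace EnvelopingGroup

variable {G : Type*} [Group G]

abbrev of (g : G) : EnvelopingGroup G := PresentedGroup.of g

theorem of_mul_of_mul_inv (g h : G) : of g * of h * (of g)⁻¹ = of (g * h * g⁻¹) := by
  rw [← mul_inv_eq_one]
  exact PresentedGroup.one_of_mem ⟨g, h, rfl⟩

def proj : EnvelopingGroup G →* G :=
  PresentedGroup.toGroup (f := id) <| by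
    rintro _ ⟨g, h, rfl⟩
    simp

@[simp]
theorem proj_of (g : G) : proj (of g) = g :=
  PresentedGroup.toGroup.of _

theorem mul_of_mul_inv (a : EnvelopingGroup G) (k : G) :
    a * of k * a⁻¹ = of (proj a * k * (proj a)⁻¹) := by
  have ha : a ∈ closure (Set.range of) := by
    rw [PresentedGroup.closure_range_of]
    trivial
  induction ha using closure_induction generalizing k with
  | mem _ hg =>
    obtain ⟨g, rfl⟩ := hg
    rw [proj_of, of_mul_of_mul_inv]
  | one => simp
  | mul a b _ _ iha ihb =>
    calc a * b * of k * (a * b)⁻¹ = a * (b * of k * b⁻¹) * a⁻¹ := by group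
      _ = _ := by
        rw [ihb, iha, map_mul]
        group
  | inv a _ iha =>
    have hk : a * of ((proj a)⁻¹ * k * proj a) * a⁻¹ = of k := by
      rw [iha]
      group
    rw [← hk, map_inv]
    group

theorem ker_proj_le_center :
    (proj : EnvelopingGroup G →* G).ker ≤ center (EnvelopingGroup G) := by
  intro a ha
  rw [mem_center_iff]
  intro b
  refine mem_centralizer_singleton_iff.mp (PresentedGroup.generated_by _ _ (fun k => ?_) b)
  rw [mem_centralizer_singleton_iff, eq_comm, ← mul_inv_eq_iff_eq_mul, mul_of_mul_inv,
    proj.mem_ker.mp ha]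
  simp

theorem factorSet_of_comm (g h : G) : factorSet of g h = factorSet of h g := by
  have hconj : (of g)⁻¹ * of (g * h) * of g = of (h * g) := by
    simpa using mul_of_mul_inv (of g)⁻¹ (g * h)
  have hcentral : (of g)⁻¹ * factorSet of g h = factorSet of g h * (of g)⁻¹ :=
    mem_center_iff.mp (factorSet_mem_center ker_proj_le_center proj_of g h) _
  calc factorSet of g h = (of g)⁻¹ * factorSet of g h * of g := by rw [hcentral]; group
    _ = of h * of g * ((of g)⁻¹ * of (g * h) * of g)⁻¹ := by unfold factorSet; group
    _ = factorSet of h g := by rw [hconj]; rfl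

end EnvelopingGroup

open EnvelopingGroup in
theorem exists_symm_cocycle_not_coboundary_of_card_commutator_lt_general
    (G : Type*) [Group G]
    (h : Cardinal.mk ↥(commutator G) < Cardinal.mk ↥(commutator (EnvelopingGroup G))) :
    ∃ α : G → G → ℂˣ, IsTwoCocycle α ∧ IsSymmCocycle α ∧ ¬ IsCoboundary α := by
  obtain ⟨x, hx_comm, hx_ker, hx_ne⟩ := exists_mem_commutator_mem_ker_ne_one_of_card_lt proj h
  obtain ⟨φ, hφ⟩ := exists_monoidHom_units_complex_apply_ne_one
    (x := (⟨x, ker_proj_le_center hx_ker⟩ : center (EnvelopingGroup G)))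
    (by simpa [Subtype.ext_iff] using hx_ne)
  have hc : ∀ g h : G, factorSet of g h ∈ center (EnvelopingGroup G) :=
    factorSet_mem_center ker_proj_le_center proj_of
  refine ⟨fun g h => φ (centralFactorSet hc g h), isTwoCocycle_comp_centralFactorSet hc φ,
    fun g h => congrArg φ (Subtype.ext (factorSet_of_comm g h)), fun hcob => hφ ?_⟩
  exact apply_eq_one_of_isCoboundary ker_proj_le_center proj_of hcob hx_ker hx_comm

/-- If the commutator subgroup of `A(G)` has cardinality strictly greater than the
commutator subgroup of a finite group `G`, then `G` has a symmetric 2-cocycle valued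
in `ℂˣ` that is not a coboundary. -/
theorem exists_symm_cocycle_not_coboundary_of_card_commutator_lt
    (G : Type*) [Group G] [Fintype G]
    (h : Cardinal.mk ↥(commutator G) < Cardinal.mk ↥(commutator (EnvelopingGroup G))) :
    ∃ α : G → G → ℂˣ, IsTwoCocycle α ∧ IsSymmCocycle α ∧ ¬ IsCoboundary α :=
  exists_symm_cocycle_not_coboundary_of_card_commutator_lt_general G h
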